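/- arXiv:2206.08652 — 2 statements merged into one kernel-verified Lean document; each statement's English description precedes it below -/
import Mathlib

section
/- Let ρ > 1, let f ∈ L²(ℝ, ℂ), and let g : ℂ → ℂ be analytic (complex differentiable) on the open annulus A_ρ = {z ∈ ℂ : ρ^{−1} < |z| < ρ} and satisfy g(z) = (2/(1+z)) · f( (z−1)/(2i(z+1)) ) for every z with |z| = 1 and z ≠ −1. Then the Malmquist–Takenaka coefficients a_k = ∫_ℝ f(x) · conj(φ_k(x)) dx decay geometrically: for every r with 1 < r < ρ there exists a constant C ≥ 0 such that |a_k| ≤ C · r^{−|k|} for every integer k. -/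
open Complex MeasureTheory Set

/-- The Malmquist–Takenaka function of index `n : ℤ`. -/
noncomputable def mtf (n : ℤ) (x : ℝ) : ℂ :=
  Complex.I ^ n * (Real.sqrt (2 / Real.pi) : ℂ) *
    (1 + 2 * Complex.I * x) ^ n / (1 - 2 * Complex.I * x) ^ (n + 1)

noncomputable def zc (x : ℝ) : ℂ := (1 + 2*Complex.I*x) / (1 - 2*Complex.I*x)

lemma aux_b_ne (x : ℝ) : (1 - 2*Complex.I*(x:ℂ)) ≠ 0 := by
  intro h
  have := congrArg Complex.re h
  simp [Complex.ext_iff] at this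

lemma aux_a_ne (x : ℝ) : (1 + 2*Complex.I*(x:ℂ)) ≠ 0 := by
  intro h
  have := congrArg Complex.re h
  simp [Complex.ext_iff] at this

lemma zc_abs (x : ℝ) : ‖zc x‖ = 1 := by
  have h : ‖(1 + 2*Complex.I*(x:ℂ))‖ = ‖(1 - 2*Complex.I*(x:ℂ))‖ := by
    simp [Complex.norm_def, Complex.normSq_apply]
  rw [zc, norm_div, h, div_self]
  exact norm_ne_zero_iff.mpr (aux_b_ne x)

lemma one_add_zc (x : ℝ) : 1 + zc x = 2 / (1 - 2*Complex.I*(x:ℂ)) := by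
  rw [zc, one_add_div (aux_b_ne x)]
  congr 1
  ring

lemma zc_ne_neg_one (x : ℝ) : zc x ≠ -1 := by
  intro h
  have h2 : (2:ℂ) / (1 - 2*Complex.I*(x:ℂ)) = 0 := by rw [← one_add_zc, h]; ring
  rw [div_eq_zero_iff] at h2
  rcases h2 with h2 | h2
  · norm_num at h2
  · exact aux_b_ne x h2

lemma zc_add_one_ne (x : ℝ) : zc x + 1 ≠ 0 := by
  intro h
  exact zc_ne_neg_one x (by linear_combination h)

lemma zc_re (x : ℝ) : ((zc x - 1) / (2 * Complex.I * (zc x + 1))).re = x := by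
  have hden : (2 * Complex.I * (zc x + 1)) ≠ 0 := by
    refine mul_ne_zero (mul_ne_zero two_ne_zero Complex.I_ne_zero) (zc_add_one_ne x)
  have h1 : (zc x - 1) / (2 * Complex.I * (zc x + 1)) = (x:ℂ) := by
    rw [div_eq_iff hden, zc]
    field_simp [aux_b_ne x]
    ring
  rw [h1, Complex.ofReal_re]

lemma conj_mtf (k : ℤ) (x : ℝ) :
    (starRingEnd ℂ) (mtf k x) =
      (-Complex.I) ^ k * (Real.sqrt (2 / Real.pi) : ℂ) *
        (1 - 2 * Complex.I * x) ^ k / (1 + 2 * Complex.I * x) ^ (k + 1) := by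
  have h1 : (starRingEnd ℂ) (1 + 2*Complex.I*(x:ℂ)) = 1 - 2*Complex.I*(x:ℂ) := by
    simp [Complex.ext_iff]
  have h2 : (starRingEnd ℂ) (1 - 2*Complex.I*(x:ℂ)) = 1 + 2*Complex.I*(x:ℂ) := by
    simp [Complex.ext_iff]
  rw [mtf]
  simp only [map_div₀, map_mul, map_zpow₀, Complex.conj_I, h1, h2, Complex.conj_ofReal]

lemma key_pointwise (f : ℝ → ℂ) (g : ℂ → ℂ)
    (hg : ∀ z : ℂ, ‖z‖ = 1 → z ≠ -1 →
      g z = 2 / (1 + z) * f (((z - 1) / (2 * Complex.I * (z + 1))).re))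
    (k : ℤ) (x : ℝ) :
    f x * (starRingEnd ℂ) (mtf k x) =
      ((-Complex.I) ^ k * (Real.sqrt (2 / Real.pi) : ℂ)) *
        (g (zc x) * (zc x) ^ (-k) * ((1:ℂ) + 4 * (x:ℂ)^2)⁻¹) := by
  set a := 1 + 2*Complex.I*(x:ℂ) with ha
  set b := 1 - 2*Complex.I*(x:ℂ) with hb
  have hane := aux_a_ne x
  have hbne := aux_b_ne x
  have hgb : g (zc x) = b * f x := by
    rw [hg (zc x) (zc_abs x) (zc_ne_neg_one x), zc_re x, one_add_zc x, ← hb,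
      div_div_eq_mul_div]
    ring
  have hfx : f x = g (zc x) * b⁻¹ := by
    rw [hgb]
    field_simp
    exact (mul_div_cancel_right₀ (f x) hbne).symm
  rw [conj_mtf, hfx]
  have hz : (zc x) ^ (-k) = a ^ (-k) * b ^ k := by
    rw [zc, ← ha, ← hb, div_zpow, zpow_neg, zpow_neg, div_eq_mul_inv, inv_inv]
  have hq : ((1:ℂ) + 4 * (x:ℂ)^2)⁻¹ = (a * b)⁻¹ := by
    congr 1
    rw [ha, hb]
    ring_nf
    simp [Complex.I_sq]
  rw [hz, hq]
  rw [zpow_add₀ hane k 1, zpow_one, zpow_neg]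
  rw [mul_inv, ← ha, ← hb]
  ring

noncomputable def psi (θ : ℝ) : ℝ := Real.tan (θ/2) / 2

lemma half_mem {θ : ℝ} (hθ : θ ∈ Ioo (-Real.pi) Real.pi) :
    θ/2 ∈ Ioo (-(Real.pi/2)) (Real.pi/2) := by
  constructor <;> [linarith [hθ.1]; linarith [hθ.2]]

lemma cos_half_pos {θ : ℝ} (hθ : θ ∈ Ioo (-Real.pi) Real.pi) : 0 < Real.cos (θ/2) :=
  Real.cos_pos_of_mem_Ioo (half_mem hθ)

lemma psi_image : psi '' Ioo (-Real.pi) Real.pi = univ := by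
  ext x
  simp only [mem_univ, iff_true, mem_image]
  refine ⟨2 * Real.arctan (2*x), ⟨?_, ?_⟩, ?_⟩
  · have := Real.neg_pi_div_two_lt_arctan (2*x); linarith
  · have := Real.arctan_lt_pi_div_two (2*x); linarith
  · rw [psi]
    rw [show 2 * Real.arctan (2*x) / 2 = Real.arctan (2*x) by ring, Real.tan_arctan]
    ring

lemma psi_injOn : InjOn psi (Ioo (-Real.pi) Real.pi) := by
  intro θ₁ h1 θ₂ h2 h
  have : Real.tan (θ₁/2) = Real.tan (θ₂/2) := by
    rw [psi, psi] at h
    linarith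
  have := Real.injOn_tan (half_mem h1) (half_mem h2) this
  linarith

lemma psi_hasDeriv {θ : ℝ} (hθ : θ ∈ Ioo (-Real.pi) Real.pi) :
    HasDerivWithinAt psi ((4 * Real.cos (θ/2)^2)⁻¹) (Ioo (-Real.pi) Real.pi) θ := by
  have hc := (cos_half_pos hθ).ne'
  have h1 : HasDerivAt (fun θ : ℝ => θ/2) (1/2) θ := by
    simpa using (hasDerivAt_id θ).div_const 2
  have h2 := (Real.hasDerivAt_tan hc).comp θ h1
  have h3 := h2.div_const 2
  have : 1 / Real.cos (θ/2) ^ 2 * (1/2) / 2 = (4 * Real.cos (θ/2)^2)⁻¹ := by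
    field_simp
    ring
  rw [this] at h3
  exact h3.hasDerivWithinAt

lemma zc_psi {θ : ℝ} (hθ : θ ∈ Ioo (-Real.pi) Real.pi) :
    zc (psi θ) = Complex.exp (θ * Complex.I) := by
  have hc := (cos_half_pos hθ).ne'
  set cC : ℂ := (Real.cos (θ/2) : ℂ) with hcdef
  set sC : ℂ := (Real.sin (θ/2) : ℂ) with hsdef
  have hcC : cC ≠ 0 := Complex.ofReal_ne_zero.mpr hc
  have e1 : Complex.exp ((θ/2:ℝ) * Complex.I) = cC + sC * Complex.I := by
    rw [Complex.exp_mul_I, ← Complex.ofReal_cos, ← Complex.ofReal_sin]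
  have e2 : Complex.exp (-((θ/2:ℝ) * Complex.I)) = cC - sC * Complex.I := by
    rw [show -((θ/2:ℝ)*Complex.I) = ((-(θ/2):ℝ):ℂ) * Complex.I by push_cast; ring]
    rw [Complex.exp_mul_I, ← Complex.ofReal_cos, ← Complex.ofReal_sin,
      Real.cos_neg, Real.sin_neg, Complex.ofReal_neg]
    ring
  have hden_ne : cC - sC * Complex.I ≠ 0 := by rw [← e2]; exact Complex.exp_ne_zero _
  have htan : 2 * ((psi θ : ℝ) : ℂ) = sC / cC := by
    rw [psi, Real.tan_eq_sin_div_cos, Complex.ofReal_div, Complex.ofReal_div,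
      Complex.ofReal_ofNat]
    ring
  have alg : zc (psi θ) = (cC + sC*Complex.I)/(cC - sC*Complex.I) := by
    rw [zc, show (2*Complex.I*((psi θ:ℝ):ℂ)) = Complex.I * (2 * ((psi θ:ℝ):ℂ)) by ring, htan]
    rw [div_eq_div_iff _ hden_ne]
    · field_simp
    · intro h
      apply aux_b_ne (psi θ)
      rw [show (2*Complex.I*((psi θ:ℝ):ℂ)) = Complex.I * (2 * ((psi θ:ℝ):ℂ)) by ring, htan]
      exact h
  rw [alg, ← e1, ← e2, ← Complex.exp_sub]
  congr 1
  push_cast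
  ring

lemma integral_subst (G : ℝ → ℂ) :
    ∫ x : ℝ, G x * ((1:ℂ) + 4*(x:ℂ)^2)⁻¹ =
      (4:ℝ)⁻¹ • ∫ θ in Ioo (-Real.pi) Real.pi, G (psi θ) := by
  rw [← setIntegral_univ, ← psi_image,
    integral_image_eq_integral_abs_deriv_smul measurableSet_Ioo
      (fun θ hθ => psi_hasDeriv hθ) psi_injOn, ← integral_smul]
  refine setIntegral_congr_fun measurableSet_Ioo (fun θ hθ => ?_)
  have hc := cos_half_pos hθ
  have hkey : ((1:ℂ) + 4*((psi θ : ℝ):ℂ)^2)⁻¹ = ((Real.cos (θ/2)^2 : ℝ) : ℂ) := by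
    have h1 : (1:ℂ) + 4*((psi θ : ℝ):ℂ)^2 = ((1 + Real.tan (θ/2)^2 : ℝ) : ℂ) := by
      rw [psi]
      push_cast
      ring
    rw [h1, ← Complex.ofReal_inv, Real.inv_one_add_tan_sq hc.ne']
  rw [hkey, abs_of_pos (by positivity), Complex.real_smul, Complex.real_smul,
    Complex.ofReal_inv, Complex.ofReal_mul]
  have hcne : ((Real.cos (θ/2) : ℝ):ℂ) ≠ 0 := Complex.ofReal_ne_zero.mpr hc.ne'
  rw [Complex.ofReal_pow, mul_inv]
  have hc2 : ((Real.cos (θ/2) : ℝ):ℂ)^2 ≠ 0 := pow_ne_zero 2 hcne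
  rw [Complex.ofReal_inv]
  linear_combination (((4:ℝ):ℂ))⁻¹ * G (psi θ) * (inv_mul_cancel₀ hc2)

lemma h_periodic (g : ℂ → ℂ) (k : ℤ) :
    Function.Periodic (fun θ : ℝ => g (Complex.exp (θ * Complex.I)) *
      (Complex.exp (θ * Complex.I))^(-k)) (2*Real.pi) := by
  intro θ
  have : ((θ + 2*Real.pi : ℝ) : ℂ) * Complex.I = θ * Complex.I + 2*Real.pi*Complex.I := by
    push_cast; ring
  simp only [this, Complex.exp_add, Complex.exp_two_pi_mul_I, mul_one]

lemma interval_shift (g : ℂ → ℂ) (k : ℤ) :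
    ∫ θ in Ioo (-Real.pi) Real.pi, g (Complex.exp (θ * Complex.I)) *
      (Complex.exp (θ * Complex.I))^(-k) =
    ∫ θ in (0:ℝ)..2*Real.pi, g (Complex.exp (θ * Complex.I)) *
      (Complex.exp (θ * Complex.I))^(-k) := by
  rw [← integral_Ioc_eq_integral_Ioo, ← intervalIntegral.integral_of_le (by linarith [Real.pi_pos] : -Real.pi ≤ Real.pi)]
  have := (h_periodic g k).intervalIntegral_add_eq (-Real.pi) 0
  rw [show -Real.pi + 2*Real.pi = Real.pi by ring, show (0:ℝ) + 2*Real.pi = 2*Real.pi by ring] at this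
  exact this

lemma circle_eq (g : ℂ → ℂ) (k : ℤ) :
    (∮ z in C(0, 1), g z * z^(-(k+1))) =
      Complex.I * ∫ θ in (0:ℝ)..2*Real.pi, g (Complex.exp (θ * Complex.I)) *
        (Complex.exp (θ * Complex.I))^(-k) := by
  rw [circleIntegral, ← intervalIntegral.integral_const_mul]
  refine intervalIntegral.integral_congr (fun θ _ => ?_)
  have hmap : circleMap 0 1 θ = Complex.exp (θ * Complex.I) := by
    simp [circleMap]
  rw [deriv_circleMap, hmap, smul_eq_mul]
  have hexp := Complex.exp_ne_zero ((θ:ℂ) * Complex.I)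
  rw [show -(k+1) = -k + (-1) by ring, zpow_add₀ hexp, zpow_neg_one]
  linear_combination Complex.I * g (Complex.exp ((θ:ℂ) * Complex.I)) *
    (Complex.exp ((θ:ℂ) * Complex.I))^(-k) * (mul_inv_cancel₀ hexp)

lemma circle_move (g : ℂ → ℂ) (ρ : ℝ) (hρ : 1 < ρ)
    (hg_anal : ∀ z : ℂ, ρ⁻¹ < ‖z‖ → ‖z‖ < ρ → DifferentiableAt ℂ g z)
    (k : ℤ) (s : ℝ) (hs1 : ρ⁻¹ < s) (hs2 : s < ρ) (hs0 : 0 < s) :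
    (∮ z in C(0, 1), g z * z^(-(k+1))) = ∮ z in C(0, s), g z * z^(-(k+1)) := by
  have hdiff : ∀ z : ℂ, ρ⁻¹ < ‖z‖ → ‖z‖ < ρ →
      DifferentiableAt ℂ (fun z => g z * z^(-(k+1))) z := by
    intro z h1 h2
    have hz0 : z ≠ 0 := by
      intro h
      rw [h] at h1
      have h3 : (0:ℝ) < ρ⁻¹ := inv_pos.mpr (by linarith)
      simp only [norm_zero] at h1
      linarith
    exact (hg_anal z h1 h2).mul ((differentiableAt_zpow.mpr (Or.inl hz0)))
  have hmem : ∀ {lo hi : ℝ}, ρ⁻¹ < lo → hi < ρ →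
      ∀ z ∈ Metric.closedBall (0:ℂ) hi \ Metric.ball 0 lo,
        DifferentiableAt ℂ (fun z => g z * z^(-(k+1))) z := by
    intro lo hi hlo hhi z hz
    obtain ⟨hz1, hz2⟩ := hz
    rw [Metric.mem_closedBall, dist_zero_right] at hz1
    rw [Metric.mem_ball, dist_zero_right, not_lt] at hz2
    exact hdiff z (lt_of_lt_of_le hlo hz2) (lt_of_le_of_lt hz1 hhi)
  have hinv1 : ρ⁻¹ < 1 := inv_lt_one_of_one_lt₀ hρ
  rcases le_total 1 s with hle | hle
  · refine (Complex.circleIntegral_eq_of_differentiable_on_annulus_off_countable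
      one_pos hle Set.countable_empty
      (fun z hz => (hmem hinv1 hs2 z hz).continuousAt.continuousWithinAt)
      (fun z hz => hmem hinv1 hs2 z
        ⟨Metric.ball_subset_closedBall hz.1.1, fun h => hz.1.2 (Metric.ball_subset_closedBall h)⟩)).symm
  · exact Complex.circleIntegral_eq_of_differentiable_on_annulus_off_countable
      hs0 hle Set.countable_empty
      (fun z hz => (hmem hs1 hρ z hz).continuousAt.continuousWithinAt)
      (fun z hz => hmem hs1 hρ z
        ⟨Metric.ball_subset_closedBall hz.1.1, fun h => hz.1.2 (Metric.ball_subset_closedBall h)⟩)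

lemma circle_bound (g : ℂ → ℂ) (k : ℤ) (s M : ℝ) (hs : 0 < s) (hM : 0 ≤ M)
    (hgb : ∀ z ∈ Metric.sphere (0:ℂ) s, ‖g z‖ ≤ M) :
    ‖∮ z in C(0, s), g z * z^(-(k+1))‖ ≤ 2*Real.pi * M * s^(-k) := by
  have key : ∀ z ∈ Metric.sphere (0:ℂ) s, ‖g z * z^(-(k+1))‖ ≤ M * s^(-(k+1)) := by
    intro z hz
    rw [mem_sphere_iff_norm, sub_zero] at hz
    rw [norm_mul, norm_zpow, hz]
    exact mul_le_mul_of_nonneg_right (hgb z (by simpa [Metric.mem_sphere, dist_zero_right] using hz))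
      (zpow_nonneg hs.le _)
  have := circleIntegral.norm_integral_le_of_norm_le_const hs.le key
  calc ‖∮ z in C(0, s), g z * z^(-(k+1))‖ ≤ 2*Real.pi*s*(M * s^(-(k+1))) := this
    _ = 2*Real.pi * M * s^(-k) := by
        rw [show -(k+1) = -k + (-1) by ring, zpow_add₀ hs.ne', zpow_neg_one]
        field_simp

lemma sphere_bound (g : ℂ → ℂ) (ρ : ℝ) (hρ : 1 < ρ)
    (hg_anal : ∀ z : ℂ, ρ⁻¹ < ‖z‖ → ‖z‖ < ρ → DifferentiableAt ℂ g z)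
    (s : ℝ) (hs1 : ρ⁻¹ < s) (hs2 : s < ρ) :
    ∃ M : ℝ, 0 ≤ M ∧ ∀ z ∈ Metric.sphere (0:ℂ) s, ‖g z‖ ≤ M := by
  have hcont : ContinuousOn g (Metric.sphere (0:ℂ) s) := by
    intro z hz
    rw [mem_sphere_iff_norm, sub_zero] at hz
    exact (hg_anal z (hz ▸ hs1) (hz ▸ hs2)).continuousAt.continuousWithinAt
  obtain ⟨M, hMb⟩ := (isCompact_sphere (0:ℂ) s).exists_bound_of_continuousOn hcont
  refine ⟨max M 0, le_max_right _ _, fun z hz => ?_⟩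
  exact le_trans (by simpa using hMb z hz) (le_max_left _ _)


/-- If the transplanted function `g` is analytic in the annulus
`{z : ρ⁻¹ < |z| < ρ}`, then the Malmquist–Takenaka coefficients of `f` decay
geometrically: `|a_k| ≤ C r^{-|k|}` for every `1 < r < ρ`. -/
theorem mtf_coeff_geometric_decay (ρ : ℝ) (hρ : 1 < ρ)
    (f : ℝ → ℂ) (hf : MemLp f 2 (volume : Measure ℝ))
    (g : ℂ → ℂ)
    (hg_anal : ∀ z : ℂ, ρ⁻¹ < ‖z‖ → ‖z‖ < ρ → DifferentiableAt ℂ g z)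
    (hg : ∀ z : ℂ, ‖z‖ = 1 → z ≠ -1 →
      g z = 2 / (1 + z) * f (((z - 1) / (2 * Complex.I * (z + 1))).re)) :
    ∀ r : ℝ, 1 < r → r < ρ → ∃ C : ℝ, 0 ≤ C ∧ ∀ k : ℤ,
      ‖∫ x : ℝ, f x * (starRingEnd ℂ) (mtf k x)‖ ≤ C * r ^ (-|k|) := by
  intro r hr1 hrρ
  have hr0 : (0:ℝ) < r := by linarith
  have hρ0 : (0:ℝ) < ρ := by linarith
  have hinvρ_lt_r : ρ⁻¹ < r := lt_trans (inv_lt_one_of_one_lt₀ hρ) hr1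
  have hinvρ_lt_invr : ρ⁻¹ < r⁻¹ := by
    rw [inv_lt_inv₀ hρ0 hr0]
    exact hrρ
  have hinvr_lt_ρ : r⁻¹ < ρ := lt_trans (inv_lt_one_of_one_lt₀ hr1) (by linarith)
  obtain ⟨M₁, hM₁0, hM₁⟩ := sphere_bound g ρ hρ hg_anal r hinvρ_lt_r hrρ
  obtain ⟨M₂, hM₂0, hM₂⟩ := sphere_bound g ρ hρ hg_anal r⁻¹ hinvρ_lt_invr hinvr_lt_ρ
  set M := max M₁ M₂ with hMdef
  have hM0 : 0 ≤ M := le_trans hM₁0 (le_max_left _ _)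
  have hs2π : (0:ℝ) ≤ Real.sqrt (2/Real.pi) := Real.sqrt_nonneg _
  refine ⟨Real.sqrt (2/Real.pi) * 4⁻¹ * (2*Real.pi * M),
    mul_nonneg (mul_nonneg hs2π (by norm_num))
      (mul_nonneg (by positivity) hM0), fun k => ?_⟩
  -- Step 1: rewrite the integral
  have hIcalc : (∫ x : ℝ, f x * (starRingEnd ℂ) (mtf k x)) =
      ((-Complex.I)^k * (Real.sqrt (2/Real.pi) : ℂ)) *
        ((4:ℝ)⁻¹ • ∫ θ in Ioo (-Real.pi) Real.pi,
          g (Complex.exp (θ * Complex.I)) * (Complex.exp (θ * Complex.I))^(-k)) := by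
    simp only [key_pointwise f g hg k]
    rw [MeasureTheory.integral_const_mul]
    rw [integral_subst (fun x => g (zc x) * (zc x)^(-k))]
    congr 2
    refine setIntegral_congr_fun measurableSet_Ioo (fun θ hθ => ?_)
    rw [zc_psi hθ]
  have habs1 : ‖((-Complex.I)^k * (Real.sqrt (2/Real.pi) : ℂ))‖ =
      Real.sqrt (2/Real.pi) := by
    rw [norm_mul, norm_zpow, norm_neg, Complex.norm_I, one_zpow, one_mul,
      Complex.norm_real, Real.norm_eq_abs, _root_.abs_of_nonneg hs2π]
  have habs2 : ‖(∫ x : ℝ, f x * (starRingEnd ℂ) (mtf k x))‖ =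
      Real.sqrt (2/Real.pi) * (4⁻¹ *
        ‖(∮ z in C(0, 1), g z * z^(-(k+1)))‖) := by
    rw [hIcalc, norm_mul, habs1, Complex.real_smul, norm_mul, Complex.norm_real, Real.norm_eq_abs,
      _root_.abs_of_nonneg (by norm_num : (0:ℝ) ≤ 4⁻¹), interval_shift g k,
      circle_eq g k, norm_mul, Complex.norm_I, one_mul]
  rcases le_or_gt 0 k with hk | hk
  · have hmove := circle_move g ρ hρ hg_anal k r hinvρ_lt_r hrρ hr0
    have hb := circle_bound g k r M₁ hr0 hM₁0 hM₁
    calc ‖(∫ x : ℝ, f x * (starRingEnd ℂ) (mtf k x))‖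
        = Real.sqrt (2/Real.pi) * (4⁻¹ *
            ‖∮ z in C(0, r), g z * z^(-(k+1))‖) := by
          rw [habs2, hmove]
      _ ≤ Real.sqrt (2/Real.pi) * (4⁻¹ * (2*Real.pi*M₁*r^(-k))) := by
          exact mul_le_mul_of_nonneg_left
            (mul_le_mul_of_nonneg_left hb (by norm_num)) hs2π
      _ = (Real.sqrt (2/Real.pi) * 4⁻¹ * (2*Real.pi)) * (M₁ * r^(-k)) := by ring
      _ ≤ (Real.sqrt (2/Real.pi) * 4⁻¹ * (2*Real.pi)) * (M * r^(-k)) := by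
          refine mul_le_mul_of_nonneg_left ?_ (by positivity)
          exact mul_le_mul_of_nonneg_right (le_max_left _ _) (zpow_nonneg hr0.le _)
      _ = Real.sqrt (2/Real.pi) * 4⁻¹ * (2*Real.pi*M) * r^(-|k|) := by
          rw [abs_of_nonneg hk]; ring
  · have hmove := circle_move g ρ hρ hg_anal k r⁻¹ hinvρ_lt_invr hinvr_lt_ρ
      (inv_pos.mpr hr0)
    have hb := circle_bound g k r⁻¹ M₂ (inv_pos.mpr hr0) hM₂0 hM₂
    calc ‖(∫ x : ℝ, f x * (starRingEnd ℂ) (mtf k x))‖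
        = Real.sqrt (2/Real.pi) * (4⁻¹ *
            ‖∮ z in C(0, r⁻¹), g z * z^(-(k+1))‖) := by
          rw [habs2, hmove]
      _ ≤ Real.sqrt (2/Real.pi) * (4⁻¹ * (2*Real.pi*M₂*(r⁻¹)^(-k))) := by
          exact mul_le_mul_of_nonneg_left
            (mul_le_mul_of_nonneg_left hb (by norm_num)) hs2π
      _ = (Real.sqrt (2/Real.pi) * 4⁻¹ * (2*Real.pi)) * (M₂ * (r⁻¹)^(-k)) := by ring
      _ ≤ (Real.sqrt (2/Real.pi) * 4⁻¹ * (2*Real.pi)) * (M * (r⁻¹)^(-k)) := by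
          refine mul_le_mul_of_nonneg_left ?_ (by positivity)
          exact mul_le_mul_of_nonneg_right (le_max_right _ _)
            (zpow_nonneg (inv_pos.mpr hr0).le _)
      _ = Real.sqrt (2/Real.pi) * 4⁻¹ * (2*Real.pi*M) * r^(-|k|) := by
          rw [abs_of_neg hk, inv_zpow', neg_neg]; ring
end

section
/- Let V : ℝ → ℝ be bounded and measurable. Then for all integers j and k, the Galerkin matrix entry of the multiplication operator by V in the Malmquist–Takenaka basis has the Toeplitz form ∫_ℝ V(x) · φ_k(x) · conj(φ_j(x)) dx = ( i^{k−j} / (2π) ) · ∫_{−π}^{π} V( (1/2)·tan(θ/2) ) · e^{−i(j−k)θ} dθ; in particular it depends only on the difference j − k. -/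
open Complex MeasureTheory

lemma mtf_eq (n : ℤ) (θ : ℝ) (hθ : θ ∈ Set.Ioo (-Real.pi) Real.pi) :
    mtf n (Real.tan (θ / 2) / 2) =
      Complex.I ^ n * (Real.sqrt (2 / Real.pi) : ℂ) * (Real.cos (θ / 2) : ℂ) *
        Complex.exp ((θ / 2 : ℝ) * Complex.I) ^ (2 * n + 1) := by
  have hc : 0 < Real.cos (θ / 2) :=
    Real.cos_pos_of_mem_Ioo ⟨by linarith [hθ.1], by linarith [hθ.2]⟩
  have hc' : ((Real.cos (θ / 2) : ℝ) : ℂ) ≠ 0 := by exact_mod_cast hc.ne'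
  set e : ℂ := Complex.exp ((θ / 2 : ℝ) * Complex.I) with he_def
  have he : e ≠ 0 := Complex.exp_ne_zero _
  have h1 : (1 : ℂ) + 2 * Complex.I * ((Real.tan (θ / 2) / 2 : ℝ) : ℂ)
      = e / (Real.cos (θ / 2) : ℂ) := by
    rw [he_def, Complex.exp_mul_I, ← Complex.ofReal_cos, ← Complex.ofReal_sin,
      Real.tan_eq_sin_div_cos, Complex.ofReal_div, Complex.ofReal_div,
      Complex.ofReal_ofNat]
    have hcc : Complex.cos ((θ : ℂ) / 2) ≠ 0 := by
      rw [show ((θ : ℂ)) / 2 = ((θ / 2 : ℝ) : ℂ) by push_cast; ring,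
        ← Complex.ofReal_cos]; exact hc'
    field_simp [hcc]
  have h2 : (1 : ℂ) - 2 * Complex.I * ((Real.tan (θ / 2) / 2 : ℝ) : ℂ)
      = e⁻¹ / (Real.cos (θ / 2) : ℂ) := by
    rw [he_def, ← Complex.exp_neg,
      show -((θ / 2 : ℝ) * Complex.I) = ((-(θ / 2) : ℝ) : ℂ) * Complex.I by push_cast; ring,
      Complex.exp_mul_I, ← Complex.ofReal_cos, ← Complex.ofReal_sin,
      Real.cos_neg, Real.sin_neg, Real.tan_eq_sin_div_cos, Complex.ofReal_div,
      Complex.ofReal_div, Complex.ofReal_ofNat]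
    have hcc : Complex.cos ((θ : ℂ) / 2) ≠ 0 := by
      rw [show ((θ : ℂ)) / 2 = ((θ / 2 : ℝ) : ℂ) by push_cast; ring,
        ← Complex.ofReal_cos]; exact hc'
    field_simp [hcc]
    push_cast
    ring
  have hkey : (e / (Real.cos (θ / 2) : ℂ)) ^ n / (e⁻¹ / (Real.cos (θ / 2) : ℂ)) ^ (n + 1)
      = (Real.cos (θ / 2) : ℂ) * e ^ (2 * n + 1) := by
    rw [div_zpow, div_zpow, inv_zpow, ← zpow_neg, div_div_div_comm,
      ← zpow_sub₀ he, ← zpow_sub₀ hc',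
      show n - -(n + 1) = 2 * n + 1 by ring, show n - (n + 1) = -1 by ring,
      zpow_neg_one, div_eq_mul_inv, inv_inv]
    ring
  rw [mtf, h1, h2, mul_div_assoc, hkey]
  ring

lemma conj_mtf_eq (n : ℤ) (θ : ℝ) (hθ : θ ∈ Set.Ioo (-Real.pi) Real.pi) :
    (starRingEnd ℂ) (mtf n (Real.tan (θ / 2) / 2)) =
      Complex.I ^ (-n) * (Real.sqrt (2 / Real.pi) : ℂ) * (Real.cos (θ / 2) : ℂ) *
        Complex.exp ((θ / 2 : ℝ) * Complex.I) ^ (-(2 * n + 1)) := by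
  rw [mtf_eq n θ hθ]
  rw [map_mul, map_mul, map_mul, map_zpow₀, map_zpow₀, Complex.conj_I,
    Complex.conj_ofReal, Complex.conj_ofReal, ← Complex.exp_conj]
  rw [show (starRingEnd ℂ) ((θ / 2 : ℝ) * Complex.I) = -((θ / 2 : ℝ) * Complex.I) by
    rw [map_mul, Complex.conj_ofReal, Complex.conj_I]; ring]
  rw [Complex.exp_neg, inv_zpow', show (-Complex.I) ^ n = Complex.I ^ (-n) by
    rw [← Complex.inv_I, inv_zpow']]

/-- Toeplitz form of the Galerkin matrix of multiplication by a bounded measurable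
potential `V` in the Malmquist–Takenaka basis. -/
theorem mtf_potential_toeplitz (V : ℝ → ℝ) (hV_meas : Measurable V)
    (hV_bdd : ∃ C : ℝ, ∀ x : ℝ, |V x| ≤ C) (j k : ℤ) :
    ∫ x : ℝ, (V x : ℂ) * mtf k x * (starRingEnd ℂ) (mtf j x) =
      (Complex.I ^ (k - j) / (2 * Real.pi)) *
        ∫ θ in (-Real.pi)..Real.pi,
          (V (Real.tan (θ / 2) / 2) : ℂ) * Complex.exp (-Complex.I * ((j : ℂ) - k) * θ) := by
  have hπ : (0 : ℝ) < Real.pi := Real.pi_pos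
  set S : Set ℝ := Set.Ioo (-Real.pi) Real.pi with hS
  set f : ℝ → ℝ := fun θ => Real.tan (θ / 2) / 2 with hf
  have hcos : ∀ θ ∈ S, 0 < Real.cos (θ / 2) := fun θ hθ =>
    Real.cos_pos_of_mem_Ioo ⟨by linarith [hθ.1], by linarith [hθ.2]⟩
  have hderiv : ∀ θ ∈ S, HasDerivWithinAt f (1 / (4 * Real.cos (θ / 2) ^ 2)) S θ := by
    intro θ hθ
    have h1 : HasDerivAt (fun x : ℝ => x / 2) (1 / 2) θ := by
      simpa using (hasDerivAt_id θ).div_const 2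
    have h2 := ((Real.hasDerivAt_tan (hcos θ hθ).ne').comp θ h1).div_const 2
    have h3 : (1 : ℝ) / Real.cos (θ / 2) ^ 2 * (1 / 2) / 2 = 1 / (4 * Real.cos (θ / 2) ^ 2) := by
      ring
    rw [h3] at h2
    have h4 : HasDerivAt f (1 / (4 * Real.cos (θ / 2) ^ 2)) θ := by
      simpa [Function.comp, hf] using h2
    exact h4.hasDerivWithinAt
  have hinj : Set.InjOn f S := by
    intro a ha b hb hab
    have h2 : Real.tan (a / 2) = Real.tan (b / 2) := by
      have := hab; simp only [hf] at this; linarith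
    have := Real.injOn_tan ⟨by linarith [ha.1], by linarith [ha.2]⟩
      ⟨by linarith [hb.1], by linarith [hb.2]⟩ h2
    linarith
  have himg : f '' S = Set.univ := by
    apply Set.eq_univ_of_forall
    intro y
    refine ⟨2 * Real.arctan (2 * y), ⟨?_, ?_⟩, ?_⟩
    · linarith [Real.neg_pi_div_two_lt_arctan (2 * y)]
    · linarith [Real.arctan_lt_pi_div_two (2 * y)]
    · simp only [hf]
      rw [show 2 * Real.arctan (2 * y) / 2 = Real.arctan (2 * y) by ring, Real.tan_arctan]
      ring
  have key := MeasureTheory.integral_image_eq_integral_abs_deriv_smul measurableSet_Ioo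
    hderiv hinj (fun x => (V x : ℂ) * mtf k x * (starRingEnd ℂ) (mtf j x))
  rw [himg, MeasureTheory.setIntegral_univ] at key
  rw [key, intervalIntegral.integral_of_le (by linarith), integral_Ioc_eq_integral_Ioo,
    ← MeasureTheory.integral_const_mul]
  apply MeasureTheory.setIntegral_congr_fun measurableSet_Ioo
  intro θ hθ
  have hc : 0 < Real.cos (θ / 2) := hcos θ hθ
  have hc2 : (0 : ℝ) < 4 * Real.cos (θ / 2) ^ 2 := by positivity
  have habs : |1 / (4 * Real.cos (θ / 2) ^ 2)| = 1 / (4 * Real.cos (θ / 2) ^ 2) :=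
    abs_of_pos (by positivity)
  simp only [habs, hf]
  rw [mtf_eq k θ hθ, conj_mtf_eq j θ hθ, Complex.real_smul]
  set e : ℂ := Complex.exp ((θ / 2 : ℝ) * Complex.I) with he_def
  have he : e ≠ 0 := Complex.exp_ne_zero _
  have hAB : Complex.I ^ k * Complex.I ^ (-j) = Complex.I ^ (k - j) := by
    rw [← zpow_add₀ Complex.I_ne_zero, sub_eq_add_neg]
  have hPQ : e ^ (2 * k + 1) * e ^ (-(2 * j + 1)) = e ^ (2 * (k - j)) := by
    rw [← zpow_add₀ he]; ring_nf
  have hE : e ^ (2 * (k - j)) = Complex.exp (-Complex.I * ((j : ℂ) - k) * θ) := by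
    rw [he_def, ← Complex.exp_int_mul]
    congr 1
    push_cast
    ring
  have hs : ((Real.sqrt (2 / Real.pi) : ℝ) : ℂ) * ((Real.sqrt (2 / Real.pi) : ℝ) : ℂ)
      = ((2 / Real.pi : ℝ) : ℂ) := by
    rw [← Complex.ofReal_mul, Real.mul_self_sqrt (by positivity)]
  calc ((1 / (4 * Real.cos (θ / 2) ^ 2) : ℝ) : ℂ) *
        ((V (Real.tan (θ / 2) / 2) : ℂ) *
          (Complex.I ^ k * (Real.sqrt (2 / Real.pi) : ℂ) * (Real.cos (θ / 2) : ℂ) * e ^ (2 * k + 1)) *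
          (Complex.I ^ (-j) * (Real.sqrt (2 / Real.pi) : ℂ) * (Real.cos (θ / 2) : ℂ) * e ^ (-(2 * j + 1))))
      = (Complex.I ^ k * Complex.I ^ (-j)) * (e ^ (2 * k + 1) * e ^ (-(2 * j + 1))) *
          (((Real.sqrt (2 / Real.pi) : ℝ) : ℂ) * ((Real.sqrt (2 / Real.pi) : ℝ) : ℂ)) *
          (((1 / (4 * Real.cos (θ / 2) ^ 2) : ℝ) : ℂ) * (Real.cos (θ / 2) : ℂ) * (Real.cos (θ / 2) : ℂ)) *
          (V (Real.tan (θ / 2) / 2) : ℂ) := by ring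
    _ = Complex.I ^ (k - j) * Complex.exp (-Complex.I * ((j : ℂ) - k) * θ) *
          ((2 / Real.pi : ℝ) : ℂ) *
          (((1 / (4 * Real.cos (θ / 2) ^ 2) : ℝ) : ℂ) * (Real.cos (θ / 2) : ℂ) * (Real.cos (θ / 2) : ℂ)) *
          (V (Real.tan (θ / 2) / 2) : ℂ) := by rw [hAB, hPQ, hE, hs]
    _ = Complex.I ^ (k - j) * Complex.exp (-Complex.I * ((j : ℂ) - k) * θ) *
          (V (Real.tan (θ / 2) / 2) : ℂ) *
          (((2 / Real.pi) * (1 / (4 * Real.cos (θ / 2) ^ 2)) * Real.cos (θ / 2) * Real.cos (θ / 2) : ℝ) : ℂ) := by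
        push_cast
        ring
    _ = Complex.I ^ (k - j) / (2 * Real.pi) *
          ((V (Real.tan (θ / 2) / 2) : ℂ) * Complex.exp (-Complex.I * ((j : ℂ) - k) * θ)) := by
        have hreal : (2 / Real.pi) * (1 / (4 * Real.cos (θ / 2) ^ 2)) * Real.cos (θ / 2) *
            Real.cos (θ / 2) = 1 / (2 * Real.pi) := by
          field_simp
          ring
        rw [hreal]
        push_cast
        ring
end
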